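/- The complex ℂ[x,y,z,t]³ ←M— ℂ[x,y,z,t]⁶ ←J·Mᵀ— ℂ[x,y,z,t]³ ← 0 is exact: the linear map given by the 6×3 matrix J·Mᵀ is injective, and its image equals the kernel of the linear map given by the 3×6 matrix M. -/
import Mathlib

noncomputable section

open MvPolynomial

namespace Reid

abbrev A : Type := MvPolynomial (Fin 4) ℂ

def x : A := X 0
def y : A := X 1
def z : A := X 2
def t : A := X 3

/-- The 3×6 matrix `M` of relations. -/
def M : Matrix (Fin 3) (Fin 6) A :=
  !![-x, -y, -z, -t, 0, 0;
     y, z, 0, -(x * z), t, x ^ 2;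
     0, -x ^ 2, t, z ^ 2, -(y * z), -(x * z) + y ^ 2]

/-- The 6×6 block matrix `J = [[0, I₃], [−I₃, 0]]`. -/
def J : Matrix (Fin 6) (Fin 6) A :=
  !![0, 0, 0, 1, 0, 0;
     0, 0, 0, 0, 1, 0;
     0, 0, 0, 0, 0, 1;
     -1, 0, 0, 0, 0, 0;
     0, -1, 0, 0, 0, 0;
     0, 0, -1, 0, 0, 0]

section Aux
open Polynomial


abbrev B : Type := MvPolynomial (Fin 3) ℂ
abbrev A' : Type := Polynomial B

def ξ : B := X 0
def η : B := X 1
def ζ : B := X 2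
def xx : A' := Polynomial.C ξ
def yy : A' := Polynomial.C η
def zz : A' := Polynomial.C ζ
def tt : A' := Polynomial.X

@[simp] lemma cvA {α : Type*} (x:α) (u : Fin 5 → α) : Matrix.vecCons x u 5 = u 4 := rfl
@[simp] lemma cvB {α : Type*} (x:α) (u : Fin 4 → α) : Matrix.vecCons x u 4 = u 3 := rfl
@[simp] lemma cvC {α : Type*} (x:α) (u : Fin 3 → α) : Matrix.vecCons x u 3 = u 2 := rfl
@[simp] lemma cvD {α : Type*} (x:α) (u : Fin 2 → α) : Matrix.vecCons x u 2 = u 1 := rfl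
@[simp] lemma cvE {α : Type*} (x:α) (u : Fin 1 → α) : Matrix.vecCons x u 1 = u 0 := rfl
@[simp] lemma cvF {α : Type*} (x:α) (u : Fin 5 → α) : Matrix.vecCons x u 4 = u 3 := rfl
@[simp] lemma cvG {α : Type*} (x:α) (u : Fin 5 → α) : Matrix.vecCons x u 3 = u 2 := rfl
@[simp] lemma cvH {α : Type*} (x:α) (u : Fin 4 → α) : Matrix.vecCons x u 3 = u 2 := rfl
@[simp] lemma cvI {α : Type*} (x:α) (u : Fin 5 → α) : Matrix.vecCons x u 2 = u 1 := rfl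
@[simp] lemma cvJ {α : Type*} (x:α) (u : Fin 4 → α) : Matrix.vecCons x u 2 = u 1 := rfl
@[simp] lemma cvK {α : Type*} (x:α) (u : Fin 3 → α) : Matrix.vecCons x u 2 = u 1 := rfl

@[simp] lemma vec6_three {α : Type*} (a b c d e f : α) : ![a,b,c,d,e,f] 3 = d := rfl
@[simp] lemma vec6_five {α : Type*} (a b c d e f : α) : ![a,b,c,d,e,f] 5 = f := rfl
@[simp] lemma vec6_four {α : Type*} (a b c d e f : α) : ![a,b,c,d,e,f] 4 = e := rfl

@[simp] lemma f63 : (Fin.succ 2 : Fin 6) = 3 := rfl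
@[simp] lemma f64 : (Fin.succ 3 : Fin 6) = 4 := rfl
@[simp] lemma f65 : (Fin.succ 4 : Fin 6) = 5 := rfl
@[simp] lemma f53 : (Fin.succ 2 : Fin 5) = 3 := rfl
@[simp] lemma f54 : (Fin.succ 3 : Fin 5) = 4 := rfl
@[simp] lemma f43 : (Fin.succ 2 : Fin 4) = 3 := rfl

def M' : Matrix (Fin 3) (Fin 6) A' :=
  !![-xx, -yy, -zz, -tt, 0, 0;
     yy, zz, 0, -(xx * zz), tt, xx ^ 2;
     0, -xx ^ 2, tt, zz ^ 2, -(yy * zz), -(xx * zz) + yy ^ 2]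

def K' : Matrix (Fin 6) (Fin 3) A' :=
  !![-tt, -(xx*zz), zz^2;
     0, tt, -(yy*zz);
     0, xx^2, -(xx*zz) + yy^2;
     xx, -yy, 0;
     yy, -zz, xx^2;
     zz, 0, -tt]

set_option maxHeartbeats 1600000 in
theorem MK0 : M' * K' = 0 := by
  apply Matrix.ext; intro i j
  fin_cases i <;> fin_cases j <;>
    simp [M', K', Matrix.mul_apply, Fin.sum_univ_succ, Matrix.cons_val_succ] <;> ring

lemma deg_red (p : A') (n : ℕ) (hp : p.natDegree ≤ n + 1) :
    (p - Polynomial.C (p.coeff (n+1)) * Polynomial.X ^ (n+1)).natDegree ≤ n := by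
  apply natDegree_le_iff_coeff_eq_zero.mpr
  intro m hm
  rw [Polynomial.coeff_sub, Polynomial.coeff_C_mul, Polynomial.coeff_X_pow]
  rcases eq_or_lt_of_le (Nat.succ_le_of_lt hm) with h | h
  · rw [← h]; simp
  · have h0 : p.coeff m = 0 := coeff_eq_zero_of_natDegree_lt (lt_of_le_of_lt hp h)
    have : ¬ (m = n + 1) := by omega
    simp [h0, this]

/-- base-case linear algebra over B -/
lemma baseB (b0 b1 b5 : B)
    (ha : ξ * b0 + η * b1 = 0)
    (hb : η * b0 + ζ * b1 + ξ^2 * b5 = 0)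
    (hc : -ξ^2 * b1 + (η^2 - ξ*ζ) * b5 = 0) :
    b0 = 0 ∧ b1 = 0 ∧ b5 = 0 := by
  set R : Matrix (Fin 3) (Fin 3) B := !![ξ, η, 0; η, ζ, ξ^2; 0, -ξ^2, η^2 - ξ*ζ] with hR
  have hv : R.mulVec ![b0, b1, b5] = 0 := by
    funext j
    fin_cases j
    · simp [hR, Matrix.mulVec, dotProduct, Fin.sum_univ_succ, Matrix.cons_val_succ]
      linear_combination ha
    · simp [hR, Matrix.mulVec, dotProduct, Fin.sum_univ_succ, Matrix.cons_val_succ]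
      linear_combination hb
    · simp [hR, Matrix.mulVec, dotProduct, Fin.sum_univ_succ, Matrix.cons_val_succ]
      linear_combination hc
  have h2 : R.det • ![b0, b1, b5] = (0 : Fin 3 → B) := by
    calc R.det • ![b0, b1, b5]
        = (R.det • (1 : Matrix (Fin 3) (Fin 3) B)).mulVec ![b0, b1, b5] := by
          rw [Matrix.smul_mulVec, Matrix.one_mulVec]
      _ = (R.adjugate * R).mulVec ![b0, b1, b5] := by rw [Matrix.adjugate_mul]
      _ = R.adjugate.mulVec (R.mulVec ![b0, b1, b5]) := by rw [Matrix.mulVec_mulVec]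
      _ = 0 := by rw [hv, Matrix.mulVec_zero]
  have hdet : R.det ≠ 0 := by
    intro h0
    have := congrArg (MvPolynomial.eval (fun i : Fin 3 => if i = 0 then (1:ℂ) else 0)) h0
    rw [Matrix.det_fin_three] at this
    simp [hR, ξ, η, ζ, Matrix.cons_val_succ] at this
  refine ⟨?_, ?_, ?_⟩
  · have := congrFun h2 0
    simpa [hdet] using this
  · have := congrFun h2 1
    simpa [hdet] using this
  · have := congrFun h2 2
    simpa [hdet] using this


/-- canonical forms of the three syzygy equations -/
lemma syzEqs (w : Fin 6 → A') (hw : M'.mulVec w = 0) :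
    (Polynomial.C ξ * w 0 + Polynomial.C η * w 1 + Polynomial.C ζ * w 2
      + Polynomial.X * w 3 = 0) ∧
    (Polynomial.C η * w 0 + Polynomial.C ζ * w 1 - Polynomial.C (ξ*ζ) * w 3
      + Polynomial.X * w 4 + Polynomial.C (ξ^2) * w 5 = 0) ∧
    (Polynomial.C (-ξ^2) * w 1 + Polynomial.X * w 2 + Polynomial.C (ζ^2) * w 3
      - Polynomial.C (η*ζ) * w 4 + Polynomial.C (η^2 - ξ*ζ) * w 5 = 0) := by
  have e0 := congrFun hw 0
  have e1 := congrFun hw 1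
  have e2 := congrFun hw 2
  simp [M', Matrix.mulVec, dotProduct, Fin.sum_univ_succ, Matrix.cons_val_succ,
    xx, yy, zz, tt] at e0 e1 e2
  refine ⟨by linear_combination -e0, ?_, ?_⟩
  · simp only [map_mul, map_pow, map_sub]
    linear_combination e1
  · simp only [map_mul, map_pow, map_sub, map_neg]
    linear_combination e2

set_option maxHeartbeats 3200000 in
theorem ker_le_im : ∀ (n : ℕ) (w : Fin 6 → A'),
    (∀ i, (w i).natDegree ≤ n) → M'.mulVec w = 0 →
    ∃ s : Fin 3 → A', K'.mulVec s = w := by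
  intro n
  induction n with
  | zero =>
    intro w hdeg hw
    obtain ⟨E0, E1, E2⟩ := syzEqs w hw
    have hwC : ∀ i, w i = Polynomial.C ((w i).coeff 0) := fun i =>
      Polynomial.eq_C_of_natDegree_le_zero (hdeg i)
    rw [hwC 0, hwC 1, hwC 2, hwC 3] at E0
    rw [hwC 0, hwC 1, hwC 3, hwC 4, hwC 5] at E1
    rw [hwC 1, hwC 2, hwC 3, hwC 4, hwC 5] at E2
    -- extract coefficients
    have c00 := congrArg (fun p => p.coeff 0) E0
    have c01 := congrArg (fun p => p.coeff 1) E0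
    have c10 := congrArg (fun p => p.coeff 0) E1
    have c11 := congrArg (fun p => p.coeff 1) E1
    have c20 := congrArg (fun p => p.coeff 0) E2
    have c21 := congrArg (fun p => p.coeff 1) E2
    simp only [Polynomial.coeff_add, Polynomial.coeff_sub, Polynomial.coeff_neg, neg_mul,
      Polynomial.coeff_C_mul, Polynomial.mul_coeff_zero, Polynomial.coeff_X_zero,
      Polynomial.coeff_X_mul, Polynomial.coeff_C, if_false, one_ne_zero, if_true, Polynomial.coeff_zero, sub_zero, zero_sub,
      zero_mul, mul_zero, add_zero, zero_add, neg_zero, neg_eq_zero,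
      reduceIte] at c00 c01 c10 c11 c20 c21
    have ha : ξ * (w 0).coeff 0 + η * (w 1).coeff 0 = 0 := by
      linear_combination c00 - ζ * c21
    have hb2 : η * (w 0).coeff 0 + ζ * (w 1).coeff 0 + ξ^2 * (w 5).coeff 0 = 0 := by
      linear_combination c10 + ξ*ζ*c01
    have hc2 : -ξ^2 * (w 1).coeff 0 + (η^2 - ξ*ζ) * (w 5).coeff 0 = 0 := by
      linear_combination c20 - ζ^2*c01 + η*ζ*c11
    obtain ⟨h0, h1, h5⟩ := baseB _ _ _ ha hb2 hc2
    have hall : ∀ i, w i = 0 := by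
      intro i
      have h : (w i).coeff 0 = 0 := by
        fin_cases i
        exacts [h0, h1, c21, c01, c11, h5]
      rw [hwC i, h, map_zero]
    exact ⟨0, by rw [Matrix.mulVec_zero]; funext i; exact (hall i).symm⟩
  | succ n ih =>
    intro w hdeg hw
    obtain ⟨E0, E1, E2⟩ := syzEqs w hw
    have hz : ∀ i, (w i).coeff (n+2) = 0 := fun i =>
      Polynomial.coeff_eq_zero_of_natDegree_lt ((hdeg i).trans_lt (Nat.lt_succ_self _))
    have c0 := congrArg (fun p => p.coeff (n+2)) E0
    have c1 := congrArg (fun p => p.coeff (n+2)) E1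
    have c2 := congrArg (fun p => p.coeff (n+2)) E2
    simp only [Polynomial.coeff_add, Polynomial.coeff_sub, Polynomial.coeff_neg,
      Polynomial.coeff_C_mul, Polynomial.coeff_X_mul, Polynomial.coeff_zero, neg_mul,
      hz, mul_zero, add_zero, zero_add, neg_zero, zero_sub, neg_eq_zero, sub_zero] at c0 c1 c2
    -- c0 : (w 3).coeff (n+1) = 0, c1 : (w 4).coeff (n+1) = 0, c2 : (w 2).coeff (n+1) = 0
    set a := (w 0).coeff (n+1) with ha
    set bb := (w 1).coeff (n+1) with hbbd
    set c := (w 5).coeff (n+1) with hcd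
    set s₀ : Fin 3 → A' := ![Polynomial.C (-a) * Polynomial.X^n,
      Polynomial.C bb * Polynomial.X^n, Polynomial.C (-c) * Polynomial.X^n] with hs₀
    have hker : M'.mulVec (w - K'.mulVec s₀) = 0 := by
      rw [Matrix.mulVec_sub, hw, Matrix.mulVec_mulVec, MK0, Matrix.zero_mulVec, sub_zero]
    have hdeg' : ∀ i, ((w - K'.mulVec s₀) i).natDegree ≤ n := by
      intro i
      fin_cases i
      · show ((w - K'.mulVec s₀) 0).natDegree ≤ n
        have hrw : (w - K'.mulVec s₀) 0 = (w 0 - Polynomial.C a * Polynomial.X^(n+1))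
            + Polynomial.C (ξ*ζ*bb + ζ^2*c) * Polynomial.X^n := by
          simp [K', Matrix.mulVec, dotProduct, Fin.sum_univ_succ, Matrix.cons_val_succ,
            hs₀, xx, yy, zz, tt, map_add, map_mul, map_pow, map_neg]
          ring
        rw [hrw]
        exact le_trans (Polynomial.natDegree_add_le _ _)
          (max_le (deg_red _ _ (hdeg 0)) (Polynomial.natDegree_C_mul_X_pow_le _ _))
      · show ((w - K'.mulVec s₀) 1).natDegree ≤ n
        have hrw : (w - K'.mulVec s₀) 1 = (w 1 - Polynomial.C bb * Polynomial.X^(n+1))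
            + Polynomial.C (-(η*ζ*c)) * Polynomial.X^n := by
          simp [K', Matrix.mulVec, dotProduct, Fin.sum_univ_succ, Matrix.cons_val_succ,
            hs₀, xx, yy, zz, tt, map_add, map_mul, map_pow, map_neg]
          ring
        rw [hrw]
        exact le_trans (Polynomial.natDegree_add_le _ _)
          (max_le (deg_red _ _ (hdeg 1)) (Polynomial.natDegree_C_mul_X_pow_le _ _))
      · show ((w - K'.mulVec s₀) 2).natDegree ≤ n
        have hrw : (w - K'.mulVec s₀) 2 = (w 2 - Polynomial.C ((w 2).coeff (n+1)) * Polynomial.X^(n+1))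
            + Polynomial.C (-(ξ^2*bb) - (ξ*ζ*c - η^2*c)) * Polynomial.X^n := by
          rw [c2, map_zero, zero_mul, sub_zero]
          simp [K', Matrix.mulVec, dotProduct, Fin.sum_univ_succ, Matrix.cons_val_succ,
            hs₀, xx, yy, zz, tt, map_add, map_mul, map_pow, map_neg, map_sub]
          ring
        rw [hrw]
        exact le_trans (Polynomial.natDegree_add_le _ _)
          (max_le (deg_red _ _ (hdeg 2)) (Polynomial.natDegree_C_mul_X_pow_le _ _))
      · show ((w - K'.mulVec s₀) 3).natDegree ≤ n
        have hrw : (w - K'.mulVec s₀) 3 = (w 3 - Polynomial.C ((w 3).coeff (n+1)) * Polynomial.X^(n+1))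
            + Polynomial.C (ξ*a + η*bb) * Polynomial.X^n := by
          rw [c0, map_zero, zero_mul, sub_zero]
          simp [K', Matrix.mulVec, dotProduct, Fin.sum_univ_succ, Matrix.cons_val_succ,
            hs₀, xx, yy, zz, tt, map_add, map_mul, map_pow, map_neg]
          ring
        rw [hrw]
        exact le_trans (Polynomial.natDegree_add_le _ _)
          (max_le (deg_red _ _ (hdeg 3)) (Polynomial.natDegree_C_mul_X_pow_le _ _))
      · show ((w - K'.mulVec s₀) 4).natDegree ≤ n
        have hrw : (w - K'.mulVec s₀) 4 = (w 4 - Polynomial.C ((w 4).coeff (n+1)) * Polynomial.X^(n+1))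
            + Polynomial.C (η*a + ζ*bb + ξ^2*c) * Polynomial.X^n := by
          rw [c1, map_zero, zero_mul, sub_zero]
          simp [K', Matrix.mulVec, dotProduct, Fin.sum_univ_succ, Matrix.cons_val_succ,
            hs₀, xx, yy, zz, tt, map_add, map_mul, map_pow, map_neg]
          ring
        rw [hrw]
        exact le_trans (Polynomial.natDegree_add_le _ _)
          (max_le (deg_red _ _ (hdeg 4)) (Polynomial.natDegree_C_mul_X_pow_le _ _))
      · show ((w - K'.mulVec s₀) 5).natDegree ≤ n
        have hrw : (w - K'.mulVec s₀) 5 = (w 5 - Polynomial.C c * Polynomial.X^(n+1))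
            + Polynomial.C (ζ*a) * Polynomial.X^n := by
          simp [K', Matrix.mulVec, dotProduct, Fin.sum_univ_succ, Matrix.cons_val_succ,
            hs₀, xx, yy, zz, tt, map_add, map_mul, map_pow, map_neg]
          ring
        rw [hrw]
        exact le_trans (Polynomial.natDegree_add_le _ _)
          (max_le (deg_red _ _ (hdeg 5)) (Polynomial.natDegree_C_mul_X_pow_le _ _))
    obtain ⟨s', hs'⟩ := ih (w - K'.mulVec s₀) hdeg' hker
    refine ⟨s₀ + s', ?_⟩
    rw [Matrix.mulVec_add, hs']
    abel







def KA : Matrix (Fin 6) (Fin 3) A :=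
  !![-t, -(x*z), z^2;
     0, t, -(y*z);
     0, x^2, -(x*z) + y^2;
     x, -y, 0;
     y, -z, x^2;
     z, 0, -t]

set_option maxHeartbeats 1600000 in
lemma JMT : J * M.transpose = KA := by
  apply Matrix.ext; intro i j
  fin_cases i <;> fin_cases j <;>
    simp [M, J, KA, Matrix.mul_apply, Matrix.transpose_apply, Fin.sum_univ_succ,
      Matrix.cons_val_succ, Matrix.vecHead, Matrix.vecTail] <;> ring

set_option maxHeartbeats 1600000 in
lemma MKA0 : M * KA = 0 := by
  apply Matrix.ext; intro i j
  fin_cases i <;> fin_cases j <;>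
    simp [M, KA, Matrix.mul_apply, Fin.sum_univ_succ, Matrix.cons_val_succ] <;> ring

def φ : A ≃ₐ[ℂ] A' :=
  (MvPolynomial.renameEquiv ℂ (finRotate 4)).trans (MvPolynomial.finSuccEquiv ℂ 3)

def fA : A →+* A' := φ.toAlgHom.toRingHom

lemma φx : fA x = xx := by
  have h1 : (finRotate 4) 0 = 1 := by decide
  simp [fA, φ, x, xx, ξ, MvPolynomial.renameEquiv_apply, h1]
  rw [show (1 : Fin 4) = Fin.succ 0 from rfl, MvPolynomial.finSuccEquiv_X_succ]

lemma φy : fA y = yy := by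
  have h1 : (finRotate 4) 1 = 2 := by decide
  simp [fA, φ, y, yy, η, MvPolynomial.renameEquiv_apply, h1]
  rw [show (2 : Fin 4) = Fin.succ 1 from rfl, MvPolynomial.finSuccEquiv_X_succ]

lemma φz : fA z = zz := by
  have h1 : (finRotate 4) 2 = 3 := by decide
  simp [fA, φ, z, zz, ζ, MvPolynomial.renameEquiv_apply, h1]
  rw [show (3 : Fin 4) = Fin.succ 2 from rfl, MvPolynomial.finSuccEquiv_X_succ]

lemma φt : fA t = tt := by
  have h1 : (finRotate 4) 3 = 0 := by decide
  simp [fA, φ, t, tt, MvPolynomial.renameEquiv_apply, h1]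
  rw [MvPolynomial.finSuccEquiv_X_zero]

lemma mulVec_map {m n : ℕ} (f : A →+* A') (N : Matrix (Fin m) (Fin n) A) (v : Fin n → A) :
    (N.map f).mulVec (fun j => f (v j)) = fun i => f (N.mulVec v i) := by
  funext i
  simp [Matrix.mulVec, dotProduct, map_sum, map_mul, Matrix.map_apply]

lemma hMmap : M.map fA = M' := by
  apply Matrix.ext; intro i j
  fin_cases i <;> fin_cases j <;>
    simp [M, M', Matrix.map_apply, map_mul, map_pow, map_neg, map_add, φx, φy, φz, φt]

lemma hKAmap : KA.map fA = K' := by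
  apply Matrix.ext; intro i j
  fin_cases i <;> fin_cases j <;>
    simp [KA, K', Matrix.map_apply, map_mul, map_pow, map_neg, map_add, φx, φy, φz, φt]

lemma hnz1 : (x^2*y*z + t*(y^2 - x*z) : A) ≠ 0 := by
  intro h0
  have := congrArg (MvPolynomial.eval (fun i : Fin 4 => if i = 3 then 0 else (1:ℂ))) h0
  simp [x, y, z, t] at this

lemma KAinj : ∀ s : Fin 3 → A, KA.mulVec s = 0 → s = 0 := by
  intro s h
  have h2 := congrFun h 1
  have h3 := congrFun h 2
  have h4 := congrFun h 3
  simp [KA, Matrix.mulVec, dotProduct, Fin.sum_univ_succ] at h2 h3 h4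
  have k3 : (x^2*y*z + t*(y^2 - x*z)) * s 2 = 0 := by
    linear_combination t*h3 - x^2*h2
  have hs2 : s 2 = 0 := by
    rcases mul_eq_zero.mp k3 with h | h
    · exact absurd h hnz1
    · exact h
  have hs1 : s 1 = 0 := by
    have : t * s 1 = 0 := by linear_combination h2 + y*z*hs2
    rcases mul_eq_zero.mp this with h | h
    · exact absurd h (MvPolynomial.X_ne_zero 3)
    · exact h
  have hs0 : s 0 = 0 := by
    have : x * s 0 = 0 := by linear_combination h4 + y*hs1
    rcases mul_eq_zero.mp this with h | h
    · exact absurd h (MvPolynomial.X_ne_zero 0)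
    · exact h
  funext i; fin_cases i
  exacts [hs0, hs1, hs2]

end Aux

/-- The complex `A³ ← A⁶ ← A³ ← 0` given by `M` and `J·Mᵀ` is exact:
`J·Mᵀ` is injective and its image is the kernel of `M`. -/
theorem resolution_exact :
    Function.Injective (fun s : Fin 3 → A => (J * M.transpose).mulVec s) ∧
    ∀ w : Fin 6 → A, M.mulVec w = 0 ↔ ∃ s : Fin 3 → A, (J * M.transpose).mulVec s = w := by
  constructor
  · intro s1 s2 h
    simp only [JMT] at h
    have : KA.mulVec (s1 - s2) = 0 := by
      rw [Matrix.mulVec_sub, h, sub_self]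
    have := KAinj _ this
    funext i
    have := congrFun this i
    simpa [sub_eq_zero] using this
  · intro w
    rw [JMT]
    constructor
    · intro hw
      -- transfer to A'
      have h1 : M'.mulVec (fun i => fA (w i)) = 0 := by
        rw [← hMmap, mulVec_map fA M w]
        funext i
        rw [congrFun hw i]
        exact map_zero fA
      obtain ⟨s', hs'⟩ := ker_le_im
        ((Finset.univ : Finset (Fin 6)).sup fun i => (fA (w i)).natDegree)
        (fun i => fA (w i))
        (fun i => Finset.le_sup (f := fun i => (fA (w i)).natDegree) (Finset.mem_univ i)) h1
      refine ⟨fun i => φ.symm (s' i), ?_⟩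
      funext i
      apply φ.injective
      have hcomp : (fun j => fA ((fun i => φ.symm (s' i)) j)) = s' := by
        funext j
        show fA (φ.symm (s' j)) = s' j
        exact φ.apply_symm_apply (s' j)
      calc φ ((KA.mulVec fun i => φ.symm (s' i)) i)
          = ((KA.map fA).mulVec (fun j => fA ((fun i => φ.symm (s' i)) j))) i := by
            rw [mulVec_map]; rfl
        _ = (K'.mulVec s') i := by rw [hKAmap, hcomp]
        _ = fA (w i) := congrFun hs' i
        _ = φ (w i) := rfl
    · rintro ⟨s, rfl⟩
      rw [Matrix.mulVec_mulVec, MKA0, Matrix.zero_mulVec]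

end Reid
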